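/- arXiv:1310.7320 — 2 statements merged into one kernel-verified Lean document; each statement's English description precedes it below -/
import Mathlib

section
/- Let ρ:ℝ→ℝ be a nonnegative, convex, smooth loss function, Y ∈ ℝⁿ, X ∈ ℝ^{n×p}, and δ = n/p. If (θ̂_*, R_*, b_*) with b_* > 0 is a fixed point of the AMP iteration — meaning R_* = Y − Xθ̂_* + Ψ(R_*; b_*) and 0 = δ Xᵀ Ψ(R_*; b_*) — then θ̂_* is a minimizer of the M-estimation objective L(θ) = Σ_{i=1}^n ρ(Y_i − ⟨X_i, θ⟩). Conversely, every minimizer θ̂_* of L corresponds to at least one AMP fixed point of the form (θ̂_*, R_*, b_*). -/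
open MeasureTheory Filter

/-- `prox ρ b z = argmin_x { ρ(x) + (x-z)²/(2b) }`. -/
noncomputable def prox (ρ : ℝ → ℝ) (b z : ℝ) : ℝ :=
  Classical.epsilon fun x => ∀ y, ρ x + (x - z) ^ 2 / (2 * b) ≤ ρ y + (y - z) ^ 2 / (2 * b)

/-- The effective score `Ψ(z;b) = b·ρ'(Prox(z;b))`. -/
noncomputable def effScore (ρ : ℝ → ℝ) (b z : ℝ) : ℝ := b * deriv ρ (prox ρ b z)

/-- A loss is smooth if it is C¹ with Lipschitz (i.e. absolutely continuous with a.e.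
bounded derivative) first derivative. -/
def SmoothLoss (ρ : ℝ → ℝ) : Prop :=
  ContDiff ℝ 1 ρ ∧ ∃ C : NNReal, LipschitzWith C (deriv ρ)

section Aux

variable {ρ : ℝ → ℝ}

/-- Gradient inequality for a convex differentiable function on ℝ. -/
lemma grad_ineq (hconv : ConvexOn ℝ Set.univ ρ) (hd : Differentiable ℝ ρ) (x y : ℝ) :
    ρ x + deriv ρ x * (y - x) ≤ ρ y := by
  rcases lt_trichotomy x y with h | h | h
  · have h1 := hconv.deriv_le_slope (Set.mem_univ x) (Set.mem_univ y) h (hd x)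
    rw [slope_def_field, le_div_iff₀ (by linarith : (0:ℝ) < y - x)] at h1
    linarith
  · simp [h]
  · have h1 := hconv.slope_le_deriv (Set.mem_univ y) (Set.mem_univ x) h (hd x)
    rw [slope_def_field, div_le_iff₀ (by linarith : (0:ℝ) < x - y)] at h1
    nlinarith
  
lemma prox_spec (hρ0 : ∀ x, 0 ≤ ρ x) (hc : Continuous ρ) {b : ℝ} (hb : 0 < b) (z : ℝ) :
    ∀ y, ρ (prox ρ b z) + (prox ρ b z - z) ^ 2 / (2 * b) ≤ ρ y + (y - z) ^ 2 / (2 * b) := by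
  have hex : ∃ x, ∀ y, ρ x + (x - z) ^ 2 / (2 * b) ≤ ρ y + (y - z) ^ 2 / (2 * b) := by
    have hcont : Continuous fun x : ℝ => ρ x + (x - z) ^ 2 / (2 * b) := by
      fun_prop
    apply hcont.exists_forall_le
    have hsq : Tendsto (fun x : ℝ => (x - z) ^ 2) (cocompact ℝ) atTop := by
      rw [cocompact_eq_atBot_atTop, tendsto_sup]
      have hpow : Tendsto (fun t : ℝ => t ^ 2) atTop atTop :=
        tendsto_pow_atTop (two_ne_zero)
      constructor
      · have h1 : Tendsto (fun x : ℝ => -x + z) atBot atTop :=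
          tendsto_atTop_add_const_right _ z tendsto_neg_atBot_atTop
        exact (hpow.comp h1).congr fun x => by simp only [Function.comp_apply]; ring
      · have h1 : Tendsto (fun x : ℝ => x - z) atTop atTop :=
          tendsto_atTop_add_const_right _ (-z) tendsto_id
        exact hpow.comp h1
    have hsq' := hsq.atTop_div_const (by positivity : (0:ℝ) < 2 * b)
    exact tendsto_atTop_mono (fun x => by nlinarith [hρ0 x]) hsq'
  exact Classical.epsilon_spec hex

lemma prox_hasDerivAt_zero (hρ0 : ∀ x, 0 ≤ ρ x) (hd : Differentiable ℝ ρ)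
    {b : ℝ} (hb : 0 < b) (z : ℝ) :
    deriv ρ (prox ρ b z) + (prox ρ b z - z) / b = 0 := by
  set x := prox ρ b z with hx
  have hspec := prox_spec hρ0 hd.continuous hb z
  have hmin : IsLocalMin (fun y : ℝ => ρ y + (y - z) ^ 2 / (2 * b)) x :=
    Filter.Eventually.of_forall hspec
  have hder : HasDerivAt (fun y : ℝ => ρ y + (y - z) ^ 2 / (2 * b))
      (deriv ρ x + (x - z) / b) x := by
    have h1 : HasDerivAt ρ (deriv ρ x) x := (hd x).hasDerivAt
    have h2 : HasDerivAt (fun y : ℝ => (y - z) ^ 2) (2 * (x - z)) x := by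
      simpa using ((hasDerivAt_id x).sub_const z).fun_pow 2
    have h3 := h2.div_const (2 * b)
    have : (2 * (x - z)) / (2 * b) = (x - z) / b := by
      rw [mul_div_mul_left _ _ (by norm_num : (2:ℝ) ≠ 0)]
    rw [this] at h3
    exact h1.add h3
  exact hmin.hasDerivAt_eq_zero hder

lemma effScore_eq (hρ0 : ∀ x, 0 ≤ ρ x) (hd : Differentiable ℝ ρ)
    {b : ℝ} (hb : 0 < b) (z : ℝ) :
    effScore ρ b z = z - prox ρ b z := by
  have h := prox_hasDerivAt_zero hρ0 hd hb z
  have hbne : b ≠ 0 := hb.ne'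
  rw [effScore]
  field_simp at h ⊢
  linarith

lemma prox_add (hρ0 : ∀ x, 0 ≤ ρ x) (hconv : ConvexOn ℝ Set.univ ρ)
    (hd : Differentiable ℝ ρ) {b : ℝ} (hb : 0 < b) (x : ℝ) :
    prox ρ b (x + b * deriv ρ x) = x := by
  set z := x + b * deriv ρ x with hz
  have hspec := prox_spec hρ0 hd.continuous hb z
  set q := prox ρ b z with hq
  have hbne : b ≠ 0 := hb.ne'
  have key : ∀ y, ρ x + (x - z) ^ 2 / (2 * b) + (y - x) ^ 2 / (2 * b)
      ≤ ρ y + (y - z) ^ 2 / (2 * b) := by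
    intro y
    have h1 := grad_ineq hconv hd x y
    have eq1 : (x - z) ^ 2 / (2 * b) + (y - x) ^ 2 / (2 * b)
        = deriv ρ x * (y - x) + (y - z) ^ 2 / (2 * b) := by
      rw [hz]; field_simp; ring
    linarith
  have h1 := hspec x
  have h2 := key q
  have h3 : (q - x) ^ 2 / (2 * b) ≤ 0 := by linarith
  have h4 : (q - x) ^ 2 ≤ 0 := by
    by_contra hcon
    push_neg at hcon
    have : 0 < (q - x) ^ 2 / (2 * b) := div_pos hcon (by positivity)
    linarith
  have h5 : q = x := by nlinarith [sq_nonneg (q - x)]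
  exact h5

end Aux

/-- a fixed point `(θ*, R*, b*)` of the AMP iteration with `b* > 0`
(namely `R* = Y - Xθ* + Ψ(R*;b*)` and `0 = δ Xᵀ Ψ(R*;b*)`) is a minimizer of the
M-estimation objective `L(θ) = Σᵢ ρ(Yᵢ - ⟨Xᵢ,θ⟩)`, and conversely every minimizer
of `L` arises from at least one such AMP fixed point. -/
theorem amp_fixed_points_are_minimizers
    (ρ : ℝ → ℝ) (hρ0 : ∀ x, 0 ≤ ρ x) (hconv : ConvexOn ℝ Set.univ ρ)
    (hsmooth : SmoothLoss ρ)
    {n p : ℕ} (hn : 0 < n) (hp : 0 < p) (δ : ℝ) (hδ : δ = (n : ℝ) / (p : ℝ))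
    (X : Matrix (Fin n) (Fin p) ℝ) (Y : Fin n → ℝ) :
    (∀ (θs : Fin p → ℝ) (Rs : Fin n → ℝ) (bs : ℝ), 0 < bs →
      (Rs = Y - X.mulVec θs + fun i => effScore ρ bs (Rs i)) →
      ((0 : Fin p → ℝ) = δ • X.transpose.mulVec fun i => effScore ρ bs (Rs i)) →
      ∀ θ' : Fin p → ℝ,
        ∑ i, ρ (Y i - X.mulVec θs i) ≤ ∑ i, ρ (Y i - X.mulVec θ' i)) ∧
    (∀ θs : Fin p → ℝ,
      (∀ θ' : Fin p → ℝ,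
        ∑ i, ρ (Y i - X.mulVec θs i) ≤ ∑ i, ρ (Y i - X.mulVec θ' i)) →
      ∃ (Rs : Fin n → ℝ) (bs : ℝ), 0 < bs ∧
        (Rs = Y - X.mulVec θs + fun i => effScore ρ bs (Rs i)) ∧
        ((0 : Fin p → ℝ) = δ • X.transpose.mulVec fun i => effScore ρ bs (Rs i))) := by
  have hd : Differentiable ℝ ρ := hsmooth.1.differentiable one_ne_zero
  have hδpos : 0 < δ := by
    rw [hδ]; positivity
  constructor
  · -- fixed point ⇒ minimizer
    intro θs Rs bs hbs hfix horth θ'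
    set r : Fin n → ℝ := fun i => Y i - X.mulVec θs i with hr
    -- prox ρ bs (Rs i) = r i
    have hprox : ∀ i, prox ρ bs (Rs i) = r i := by
      intro i
      have h1 := congrFun hfix i
      simp only [Pi.add_apply, Pi.sub_apply] at h1
      have h2 := effScore_eq hρ0 hd hbs (Rs i)
      rw [h2] at h1
      simp only [hr]
      linarith
    have heff : ∀ i, effScore ρ bs (Rs i) = bs * deriv ρ (r i) := by
      intro i; rw [effScore, hprox i]
    -- stationarity
    have hstat : ∀ j, ∑ i, X i j * deriv ρ (r i) = 0 := by
      intro j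
      have h1 := congrFun horth j
      simp only [Pi.zero_apply, Pi.smul_apply, smul_eq_mul] at h1
      have h2 : X.transpose.mulVec (fun i => effScore ρ bs (Rs i)) j
          = bs * ∑ i, X i j * deriv ρ (r i) := by
        simp only [Matrix.mulVec, dotProduct, Matrix.transpose_apply, heff,
          Finset.mul_sum]
        congr 1; funext i; ring
      rw [h2] at h1
      have := h1.symm
      rcases mul_eq_zero.mp this with h | h
      · exact absurd h hδpos.ne'
      rcases mul_eq_zero.mp h with h' | h'
      · exact absurd h' hbs.ne'
      · exact h'
    -- convexity inequality
    have hpt : ∀ i, ρ (r i) + deriv ρ (r i) * ((Y i - X.mulVec θ' i) - r i)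
        ≤ ρ (Y i - X.mulVec θ' i) := fun i => grad_ineq hconv hd _ _
    have hcross : ∑ i, deriv ρ (r i) * ((Y i - X.mulVec θ' i) - r i) = 0 := by
      have hterm : ∀ i, (Y i - X.mulVec θ' i) - r i = ∑ j, X i j * (θs j - θ' j) := by
        intro i
        simp only [hr, Matrix.mulVec, dotProduct, mul_sub, Finset.sum_sub_distrib]
        ring
      have hswap : ∑ i, deriv ρ (r i) * ((Y i - X.mulVec θ' i) - r i)
          = ∑ j, (θs j - θ' j) * ∑ i, X i j * deriv ρ (r i) := by
        simp_rw [hterm, Finset.mul_sum]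
        rw [Finset.sum_comm]
        exact Finset.sum_congr rfl fun j _ => Finset.sum_congr rfl fun i _ => by ring

      rw [hswap]
      simp [hstat]
    calc ∑ i, ρ (Y i - X.mulVec θs i)
        = ∑ i, (ρ (r i) + deriv ρ (r i) * ((Y i - X.mulVec θ' i) - r i)) := by
          rw [Finset.sum_add_distrib, hcross, add_zero]
      _ ≤ ∑ i, ρ (Y i - X.mulVec θ' i) := Finset.sum_le_sum fun i _ => hpt i
  · -- minimizer ⇒ fixed point
    intro θs hmin
    set r : Fin n → ℝ := fun i => Y i - X.mulVec θs i with hr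
    have hstat : ∀ j, ∑ i, X i j * deriv ρ (r i) = 0 := by
      intro j
      set g : ℝ → ℝ := fun t => ∑ i, ρ (r i - t * X i j) with hg
      have hmin' : IsLocalMin g 0 := by
        apply Filter.Eventually.of_forall
        intro t
        have := hmin (θs + t • (Pi.single j 1 : Fin p → ℝ))
        have heq : ∀ i, Y i - X.mulVec (θs + t • (Pi.single j 1 : Fin p → ℝ)) i = r i - t * X i j := by
          intro i
          rw [Matrix.mulVec_add, Matrix.mulVec_smul, Matrix.mulVec_single]
          simp [hr]
          ring
        simp only [hg, zero_mul, sub_zero]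
        calc ∑ i, ρ (r i) ≤ ∑ i, ρ (Y i - X.mulVec (θs + t • (Pi.single j 1 : Fin p → ℝ)) i) := this
          _ = ∑ i, ρ (r i - t * X i j) := by
              apply Finset.sum_congr rfl; intro i _; rw [heq i]
      have hder : HasDerivAt g (∑ i, deriv ρ (r i) * (-(X i j))) 0 := by
        apply HasDerivAt.fun_sum
        intro i _
        have hinner : HasDerivAt (fun t : ℝ => r i - t * X i j) (-(X i j)) 0 := by
          simpa using ((hasDerivAt_id (0:ℝ)).mul_const (X i j)).const_sub (r i)
        have := ((hd _).hasDerivAt.comp 0 hinner)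
        simpa [Function.comp_def] using this
      have h0 := hmin'.hasDerivAt_eq_zero hder
      have : -∑ i, X i j * deriv ρ (r i) = 0 := by
        rw [← h0, ← Finset.sum_neg_distrib]
        apply Finset.sum_congr rfl; intro i _; ring
      linarith
    refine ⟨fun i => r i + 1 * deriv ρ (r i), 1, one_pos, ?_, ?_⟩
    · funext i
      have hprox : prox ρ 1 (r i + 1 * deriv ρ (r i)) = r i :=
        prox_add hρ0 hconv hd one_pos (r i)
      have hprox' : prox ρ 1 (r i + deriv ρ (r i)) = r i := by
        simpa using hprox
      simp only [Pi.add_apply, Pi.sub_apply, effScore, hprox, hprox', one_mul]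
      rfl
    · have hv : (fun i => effScore ρ 1 ((fun i => r i + 1 * deriv ρ (r i)) i))
          = fun i => deriv ρ (r i) := by
        funext i
        have hprox : prox ρ 1 (r i + 1 * deriv ρ (r i)) = r i :=
          prox_add hρ0 hconv hd one_pos (r i)
        have hprox' : prox ρ 1 (r i + deriv ρ (r i)) = r i := by
          simpa using hprox
        simp [effScore, hprox, hprox']
      rw [hv]
      funext j
      simp only [Pi.zero_apply, Pi.smul_apply, smul_eq_mul]
      have : X.transpose.mulVec (fun i => deriv ρ (r i)) j = ∑ i, X i j * deriv ρ (r i) := by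
        simp [Matrix.mulVec, dotProduct, Matrix.transpose_apply]
      rw [this, hstat j, mul_zero]
end

section
/- Let ρ:ℝ→ℝ be convex, bounded below, and twice differentiable with bounded second derivative ρ''. Then the map Prox:ℝ×ℝ_{>0}→ℝ is differentiable on its domain with partial derivatives ∂Prox/∂z(z;b) = 1/(1 + b ρ''(x)) and ∂Prox/∂b(z;b) = −ρ'(x)/(1 + b ρ''(x)), both evaluated at x = Prox(z;b). In particular, letting ‖ρ''‖_∞ = sup_x ρ''(x), for each fixed b > 0 the map z ↦ Prox(z;b) is strictly increasing and Lipschitz continuous, with 1/(1 + b‖ρ''‖_∞) ≤ ∂Prox/∂z(z;b) ≤ 1. -/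
open Filter

open Set Topology

section Aux

variable {ρ : ℝ → ℝ}

lemma aux_mono (hconv : ConvexOn ℝ Set.univ ρ) (hd1 : Differentiable ℝ ρ) :
    Monotone (deriv ρ) := fun a c hac =>
  hconv.monotoneOn_deriv (fun x _ => hd1 x) (mem_univ a) (mem_univ c) hac

lemma aux_2nonneg (hmono : Monotone (deriv ρ)) (hd2 : Differentiable ℝ (deriv ρ)) (x : ℝ) :
    0 ≤ deriv (deriv ρ) x := by
  have ht : Tendsto (slope (deriv ρ) x) (𝓝[≠] x) (𝓝 (deriv (deriv ρ) x)) :=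
    hasDerivAt_iff_tendsto_slope.1 (hd2 x).hasDerivAt
  refine ge_of_tendsto ht ?_
  filter_upwards [self_mem_nhdsWithin] with y hy
  rcases lt_or_gt_of_ne (hy : y ≠ x) with h | h
  · rw [slope_comm, slope_def_field]
    exact div_nonneg (sub_nonneg.2 (hmono h.le)) (sub_nonneg.2 h.le)
  · rw [slope_def_field]
    exact div_nonneg (sub_nonneg.2 (hmono h.le)) (sub_nonneg.2 h.le)

lemma aux_sm (hmono : Monotone (deriv ρ)) {b : ℝ} (hb : 0 < b) :
    StrictMono (fun u => u + b * deriv ρ u) := fun u v huv => by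
  have := hmono huv.le
  dsimp only
  nlinarith

lemma aux_key (hconv : ConvexOn ℝ Set.univ ρ) (hd1 : Differentiable ℝ ρ)
    (hd2 : Differentiable ℝ (deriv ρ)) {b : ℝ} (hb : 0 < b) (z : ℝ) :
    prox ρ b z + b * deriv ρ (prox ρ b z) = z := by
  have hmono := aux_mono hconv hd1
  set f : ℝ → ℝ := fun x => ρ x + (x - z) ^ 2 / (2 * b) with hfdef
  have hfd : ∀ x, HasDerivAt f (deriv ρ x + (x - z) / b) x := by
    intro x
    have h2 : HasDerivAt (fun x : ℝ => (x - z) ^ 2 / (2 * b)) ((x - z) / b) x := by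
      have h3 : HasDerivAt (fun x : ℝ => (x - z) ^ 2) (2 * (x - z)) x := by
        simpa using ((hasDerivAt_id x).sub_const z).fun_pow 2
      have := h3.div_const (2 * b)
      refine this.congr_deriv ?_
      field_simp
    exact (hd1 x).hasDerivAt.add h2
  have hφc : Continuous fun x => x + b * deriv ρ x :=
    continuous_id.add (continuous_const.mul hd2.continuous)
  have htop : Tendsto (fun x => x + b * deriv ρ x) atTop atTop := by
    refine tendsto_atTop_mono' _ ?_ (tendsto_atTop_add_const_right _ (b * deriv ρ 0) tendsto_id)
    filter_upwards [eventually_ge_atTop (0:ℝ)] with x hx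
    have := hmono hx
    simp only [id_eq]
    nlinarith
  have hbot : Tendsto (fun x => x + b * deriv ρ x) atBot atBot := by
    refine tendsto_atBot_mono' _ ?_ (tendsto_atBot_add_const_right _ (b * deriv ρ 0) tendsto_id)
    filter_upwards [eventually_le_atBot (0:ℝ)] with x hx
    have := hmono hx
    simp only [id_eq]
    nlinarith
  obtain ⟨x₀, hx₀⟩ := (hφc.surjective htop hbot) z
  have hmin : ∀ y, f x₀ ≤ f y := by
    intro y
    rcases le_total x₀ y with h | h
    · have hmOn : MonotoneOn f (Ici x₀) := by
        refine monotoneOn_of_deriv_nonneg (convex_Ici x₀)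
          ((hd1.add ?_).continuous.continuousOn) ?_ ?_
        · exact (differentiable_id.sub_const z).pow 2 |>.div_const (2*b)
        · intro u _
          exact (hfd u).differentiableAt.differentiableWithinAt
        · intro u hu
          rw [interior_Ici] at hu
          rw [mem_Ioi] at hu
          rw [(hfd u).deriv]
          have h1 : deriv ρ x₀ ≤ deriv ρ u := hmono (le_of_lt hu)
          have : x₀ + b * deriv ρ x₀ = z := hx₀
          have h3 : 0 ≤ (b * deriv ρ u + (u - z)) / b := div_nonneg (by nlinarith [hu.le]) hb.le
          have h4 : (b * deriv ρ u + (u - z)) / b = deriv ρ u + (u - z) / b := by field_simp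
          linarith
      exact hmOn (self_mem_Ici) h h
    · have hmOn : AntitoneOn f (Iic x₀) := by
        refine antitoneOn_of_deriv_nonpos (convex_Iic x₀)
          ((hd1.add ?_).continuous.continuousOn) ?_ ?_
        · exact (differentiable_id.sub_const z).pow 2 |>.div_const (2*b)
        · intro u _
          exact (hfd u).differentiableAt.differentiableWithinAt
        · intro u hu
          rw [interior_Iic] at hu
          rw [mem_Iio] at hu
          rw [(hfd u).deriv]
          have h1 : deriv ρ u ≤ deriv ρ x₀ := hmono (le_of_lt hu)
          have : x₀ + b * deriv ρ x₀ = z := hx₀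
          have h3 : (b * deriv ρ u + (u - z)) / b ≤ 0 :=
            div_nonpos_iff.2 (Or.inr ⟨by nlinarith [hu.le], hb.le⟩)
          have h4 : (b * deriv ρ u + (u - z)) / b = deriv ρ u + (u - z) / b := by field_simp
          linarith
      exact hmOn h self_mem_Iic h
  have hex : ∃ x, ∀ y, ρ x + (x - z) ^ 2 / (2 * b) ≤ ρ y + (y - z) ^ 2 / (2 * b) := ⟨x₀, hmin⟩
  have hspec : ∀ y, f (prox ρ b z) ≤ f y := Classical.epsilon_spec hex
  have hloc : IsLocalMin f (prox ρ b z) := Filter.Eventually.of_forall hspec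
  have hder0 : deriv ρ (prox ρ b z) + (prox ρ b z - z) / b = 0 := by
    rw [← (hfd (prox ρ b z)).deriv]
    exact hloc.deriv_eq_zero
  field_simp at hder0
  linarith

lemma mono_slope_nonneg {g : ℝ → ℝ} (hg : Monotone g) (a c : ℝ) : 0 ≤ slope g a c := by
  rcases lt_trichotomy a c with h | rfl | h
  · rw [slope_def_field]
    exact div_nonneg (sub_nonneg.2 (hg h.le)) (sub_nonneg.2 h.le)
  · simp [slope_same]
  · rw [slope_comm, slope_def_field]
    exact div_nonneg (sub_nonneg.2 (hg h.le)) (sub_nonneg.2 h.le)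

end Aux

/-- differentiability and derivative formulas for the proximal map of a
convex, bounded-below loss with bounded second derivative; monotonicity, Lipschitz
continuity and the bounds `1/(1+b‖ρ''‖_∞) ≤ ∂Prox/∂z ≤ 1`. -/
theorem prox_differentiable_and_monotone
    (ρ : ℝ → ℝ) (hconv : ConvexOn ℝ Set.univ ρ)
    (hbdd : BddBelow (Set.range ρ))
    (hd1 : Differentiable ℝ ρ) (hd2 : Differentiable ℝ (deriv ρ))
    (hbdd2 : BddAbove (Set.range (deriv (deriv ρ)))) :
    ∀ z b : ℝ, 0 < b →
      (HasDerivAt (fun z' => prox ρ b z')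
          (1 / (1 + b * deriv (deriv ρ) (prox ρ b z))) z) ∧
      (HasDerivAt (fun b' => prox ρ b' z)
          (-(deriv ρ (prox ρ b z)) / (1 + b * deriv (deriv ρ) (prox ρ b z))) b) ∧
      StrictMono (fun z' => prox ρ b z') ∧
      LipschitzWith 1 (fun z' => prox ρ b z') ∧
      (1 / (1 + b * (⨆ x, deriv (deriv ρ) x)) ≤
          1 / (1 + b * deriv (deriv ρ) (prox ρ b z))) ∧
      (1 / (1 + b * deriv (deriv ρ) (prox ρ b z)) ≤ 1) := by
  have hmono := aux_mono hconv hd1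
  have h2n := aux_2nonneg hmono hd2
  intro z b hb
  set x := prox ρ b z with hxdef
  have hxeq : x + b * deriv ρ x = z := aux_key hconv hd1 hd2 hb z
  have hden : (0:ℝ) < 1 + b * deriv (deriv ρ) x := by nlinarith [h2n x]
  have huniq : ∀ b' : ℝ, 0 < b' → ∀ u z' : ℝ, u + b' * deriv ρ u = z' → prox ρ b' z' = u := by
    intro b' hb' u z' hu
    have hkz := aux_key hconv hd1 hd2 hb' z'
    refine (aux_sm hmono hb').injective ?_
    rw [hkz, hu]
  have hSM : StrictMono (fun z' => prox ρ b z') := by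
    intro z₁ z₂ h12
    dsimp only
    have e1 := aux_key hconv hd1 hd2 hb z₁
    have e2 := aux_key hconv hd1 hd2 hb z₂
    rcases lt_trichotomy (prox ρ b z₁) (prox ρ b z₂) with h | h | h
    · exact h
    · exfalso
      rw [h] at e1
      exact h12.ne (e1.symm.trans e2)
    · exfalso
      have := aux_sm hmono hb h
      dsimp only at this
      rw [e1, e2] at this
      linarith
  have hlipkey : ∀ z₁ z₂ : ℝ, z₁ ≤ z₂ → prox ρ b z₂ - prox ρ b z₁ ≤ z₂ - z₁ := by
    intro z₁ z₂ h12
    have e1 := aux_key hconv hd1 hd2 hb z₁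
    have e2 := aux_key hconv hd1 hd2 hb z₂
    have hm : prox ρ b z₁ ≤ prox ρ b z₂ := by
      rcases eq_or_lt_of_le h12 with rfl | h
      · exact le_rfl
      · exact (hSM h).le
    have := hmono hm
    nlinarith
  have hLip : LipschitzWith 1 (fun z' => prox ρ b z') := by
    refine LipschitzWith.of_dist_le_mul fun z₁ z₂ => ?_
    rw [NNReal.coe_one, one_mul, Real.dist_eq, Real.dist_eq]
    rcases le_total z₁ z₂ with h | h
    · have h1 := hlipkey z₁ z₂ h
      have h2 : prox ρ b z₁ ≤ prox ρ b z₂ := hSM.monotone h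
      rw [abs_of_nonpos (by linarith), abs_of_nonpos (by linarith)]
      linarith
    · have h1 := hlipkey z₂ z₁ h
      have h2 : prox ρ b z₂ ≤ prox ρ b z₁ := hSM.monotone h
      rw [abs_of_nonneg (by linarith), abs_of_nonneg (by linarith)]
      linarith
  have hdz : HasDerivAt (fun z' => prox ρ b z') (1 / (1 + b * deriv (deriv ρ) x)) z := by
    rw [one_div]
    refine HasDerivAt.of_local_left_inverse hLip.continuous.continuousAt
      ((hasDerivAt_id _).add (((hd2 _).hasDerivAt).const_mul b)) hden.ne'
      (Filter.Eventually.of_forall fun y => aux_key hconv hd1 hd2 hb y)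
  have hsup : deriv (deriv ρ) x ≤ ⨆ u, deriv (deriv ρ) u := le_ciSup hbdd2 x
  have hbound1 : 1 / (1 + b * ⨆ u, deriv (deriv ρ) u) ≤ 1 / (1 + b * deriv (deriv ρ) x) :=
    one_div_le_one_div_of_le hden (by nlinarith)
  have hbound2 : 1 / (1 + b * deriv (deriv ρ) x) ≤ 1 := by
    rw [div_le_one hden]
    nlinarith [h2n x]
  have hdb : HasDerivAt (fun b' => prox ρ b' z)
      (-(deriv ρ x) / (1 + b * deriv (deriv ρ) x)) b := by
    by_cases hρx : deriv ρ x = 0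
    · have hxz : x = z := by
        rw [hρx, mul_zero, add_zero] at hxeq
        exact hxeq
      have hev : (fun b' => prox ρ b' z) =ᶠ[𝓝 b] fun _ => x := by
        filter_upwards [eventually_gt_nhds hb] with b' hb'
        exact huniq b' hb' x z (by rw [hρx, mul_zero, add_zero]; exact hxz)
      rw [hρx]
      simpa using (hasDerivAt_const b x).congr_of_eventuallyEq hev
    · rw [hasDerivAt_iff_tendsto_slope]
      have hpos : ∀ᶠ b' in 𝓝[≠] b, 0 < b' :=
        (eventually_gt_nhds hb).filter_mono nhdsWithin_le_nhds
      have hbnd : ∀ b' : ℝ, 0 < b' → |prox ρ b' z - x| ≤ |b' - b| * |deriv ρ x| := by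
        intro b' hb'
        have e' : prox ρ b' z + b' * deriv ρ (prox ρ b' z) = z := aux_key hconv hd1 hd2 hb' z
        set x' := prox ρ b' z
        have hkey : (x' - x) + b' * (deriv ρ x' - deriv ρ x) = (b - b') * deriv ρ x := by
          linear_combination e' - hxeq
        rcases le_total x x' with h | h
        · have h1 : 0 ≤ deriv ρ x' - deriv ρ x := sub_nonneg.2 (hmono h)
          calc |x' - x| = x' - x := abs_of_nonneg (by linarith)
            _ ≤ (b - b') * deriv ρ x := by nlinarith
            _ ≤ |(b - b') * deriv ρ x| := le_abs_self _
            _ = |b' - b| * |deriv ρ x| := by rw [abs_mul, abs_sub_comm]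
        · have h1 : deriv ρ x' - deriv ρ x ≤ 0 := sub_nonpos.2 (hmono h)
          calc |x' - x| = -(x' - x) := abs_of_nonpos (by linarith)
            _ ≤ -((b - b') * deriv ρ x) := by nlinarith
            _ ≤ |(b - b') * deriv ρ x| := neg_le_abs _
            _ = |b' - b| * |deriv ρ x| := by rw [abs_mul, abs_sub_comm]
      have h0 : Tendsto (fun b' => prox ρ b' z - x) (𝓝[≠] b) (𝓝 0) := by
        refine squeeze_zero_norm' (a := fun b' => |b' - b| * |deriv ρ x|) ?_ ?_
        · filter_upwards [hpos] with b' hb'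
          simpa [Real.norm_eq_abs] using hbnd b' hb'
        · have ht : Tendsto (fun b' : ℝ => |b' - b| * |deriv ρ x|) (𝓝 b)
              (𝓝 (|b - b| * |deriv ρ x|)) :=
            (((continuous_id.sub continuous_const).abs).mul continuous_const).tendsto b
          simpa using ht.mono_left nhdsWithin_le_nhds
      have hcont : Tendsto (fun b' => prox ρ b' z) (𝓝[≠] b) (𝓝 x) := by
        have := h0.add (tendsto_const_nhds : Tendsto (fun _ : ℝ => x) (𝓝[≠] b) (𝓝 x))
        simpa using this
      have hne : ∀ᶠ b' in 𝓝[≠] b, prox ρ b' z ≠ x := by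
        filter_upwards [hpos, self_mem_nhdsWithin] with b' hb' hbb'
        intro hcon
        have e' := aux_key hconv hd1 hd2 hb' z
        rw [hcon] at e'
        have hz0 : (b' - b) * deriv ρ x = 0 := by linear_combination e' - hxeq
        rcases mul_eq_zero.1 hz0 with h | h
        · exact hbb' (Set.mem_singleton_iff.2 (by linarith))
        · exact hρx h
      have hx'tend : Tendsto (fun b' => prox ρ b' z) (𝓝[≠] b) (𝓝[≠] x) :=
        tendsto_nhdsWithin_iff.2 ⟨hcont, hne⟩
      have hslopetend : Tendsto (fun b' => slope (deriv ρ) x (prox ρ b' z)) (𝓝[≠] b)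
          (𝓝 (deriv (deriv ρ) x)) :=
        (hasDerivAt_iff_tendsto_slope.1 (hd2 x).hasDerivAt).comp hx'tend
      have hlim : Tendsto (fun b' => -(deriv ρ x) / (1 + b' * slope (deriv ρ) x (prox ρ b' z)))
          (𝓝[≠] b) (𝓝 (-(deriv ρ x) / (1 + b * deriv (deriv ρ) x))) := by
        refine Tendsto.div tendsto_const_nhds ?_ hden.ne'
        exact tendsto_const_nhds.add ((tendsto_id.mono_left nhdsWithin_le_nhds).mul hslopetend)
      refine hlim.congr' ?_
      filter_upwards [hpos, hne, self_mem_nhdsWithin] with b' hb' hne' hbb'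
      have hbb'' : b' ≠ b := hbb'
      have e' : prox ρ b' z + b' * deriv ρ (prox ρ b' z) = z := aux_key hconv hd1 hd2 hb' z
      set x' := prox ρ b' z
      have hxx' : x' - x ≠ 0 := sub_ne_zero.2 hne'
      have hs : slope (deriv ρ) x x' = (deriv ρ x' - deriv ρ x) / (x' - x) :=
        slope_def_field _ _ _
      have hsnn : 0 ≤ slope (deriv ρ) x x' := mono_slope_nonneg hmono x x'
      have hdenom : (0:ℝ) < 1 + b' * slope (deriv ρ) x x' := by nlinarith
      have hkey : (x' - x) + b' * (deriv ρ x' - deriv ρ x) = (b - b') * deriv ρ x := by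
        linear_combination e' - hxeq
      have hmul : (x' - x) * (1 + b' * slope (deriv ρ) x x') = (b - b') * deriv ρ x := by
        calc (x' - x) * (1 + b' * slope (deriv ρ) x x')
            = (x' - x) + b' * (slope (deriv ρ) x x' * (x' - x)) := by ring
          _ = (x' - x) + b' * (deriv ρ x' - deriv ρ x) := by
              rw [hs, div_mul_cancel₀ _ hxx']
          _ = (b - b') * deriv ρ x := hkey
      rw [slope_def_field (fun b'' => prox ρ b'' z) b b']
      rw [div_eq_div_iff hdenom.ne' (sub_ne_zero.2 hbb'')]
      show -deriv ρ x * (b' - b) = (x' - x) * (1 + b' * slope (deriv ρ) x x')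
      linear_combination -hmul
  exact ⟨hdz, hdb, hSM, hLip, hbound1, hbound2⟩
end
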